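/- For every finite tree-like n-model T there is a node T_w of the n-universal model T(n) such that: (1) there is a monotonic map from T onto T_w, and (2) T_w is isomorphic (via an order- and color-preserving bijection whose inverse is order-preserving) to a submodel of T that has the same root as T. -/

import Mathlib

/-! ## Formulas of intuitionistic propositional logic -/

inductive Formula : Type
  | bot : Formula
  | var : ℕ → Formula
  | and : Formula → Formula → Formula
  | or  : Formula → Formula → Formula
  | imp : Formula → Formula → Formula
  deriving DecidableEq

namespace Formula

def top : Formula := imp bot bot

def iff_ (φ ψ : Formula) : Formula := and (imp φ ψ) (imp ψ φ)

/-- `φ` contains no implication at all. -/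
def noImp : Formula → Prop
  | bot => True
  | var _ => True
  | and φ ψ => noImp φ ∧ noImp ψ
  | or φ ψ => noImp φ ∧ noImp ψ
  | imp _ _ => False

/-- NNIL-formulas: no nesting of implications to the left. -/
def IsNNIL : Formula → Prop
  | bot => True
  | var _ => True
  | and φ ψ => IsNNIL φ ∧ IsNNIL ψ
  | or φ ψ => IsNNIL φ ∧ IsNNIL ψ
  | imp φ ψ => noImp φ ∧ IsNNIL ψ

/-- `φ` is an `n`-formula: all its propositional variables are among `p_0, …, p_{n-1}`. -/
def varsBelow (n : ℕ) : Formula → Prop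
  | bot => True
  | var p => p < n
  | and φ ψ => varsBelow n φ ∧ varsBelow n ψ
  | or φ ψ => varsBelow n φ ∧ varsBelow n ψ
  | imp φ ψ => varsBelow n φ ∧ varsBelow n ψ

/-- the propositional variable `p` occurs in the formula -/
def occurs (p : ℕ) : Formula → Prop
  | bot => False
  | var q => q = p
  | and φ ψ => occurs p φ ∨ occurs p ψ
  | or φ ψ => occurs p φ ∨ occurs p ψ
  | imp φ ψ => occurs p φ ∨ occurs p ψ

/-- uniform substitution -/
def subst (σ : ℕ → Formula) : Formula → Formula
  | bot => bot
  | var p => σ p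
  | and φ ψ => and (subst σ φ) (subst σ ψ)
  | or φ ψ => or (subst σ φ) (subst σ ψ)
  | imp φ ψ => imp (subst σ φ) (subst σ ψ)

end Formula

/-- finite conjunction (empty conjunction is ⊤) -/
def listAnd : List Formula → Formula
  | [] => Formula.top
  | φ :: l => Formula.and φ (listAnd l)

/-- finite disjunction (empty disjunction is ⊥) -/
def listOr : List Formula → Formula
  | [] => Formula.bot
  | φ :: l => Formula.or φ (listOr l)

/-! ## Kripke structures, models and satisfaction -/

/-- raw Kripke structure: worlds, relation, Boolean valuation -/
structure KStruct where
  W : Type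
  R : W → W → Prop
  V : W → ℕ → Bool

namespace KStruct

/-- a Kripke model: `R` is a partial order and `V` is persistent -/
def IsModel (M : KStruct) : Prop :=
  (∀ w, M.R w w) ∧
  (∀ w u v, M.R w u → M.R u v → M.R w v) ∧
  (∀ w u, M.R w u → M.R u w → w = u) ∧
  (∀ w u p, M.R w u → M.V w p = true → M.V u p = true)

/-- an `n`-model: a Kripke model whose valuation is restricted to the variables `p_0,…,p_{n-1}` -/
def IsNModel (M : KStruct) (n : ℕ) : Prop :=
  M.IsModel ∧ ∀ w p, n ≤ p → M.V w p = false

/-- intuitionistic satisfaction -/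
def sat (M : KStruct) : M.W → Formula → Prop
  | _, Formula.bot => False
  | w, Formula.var p => M.V w p = true
  | w, Formula.and φ ψ => M.sat w φ ∧ M.sat w ψ
  | w, Formula.or φ ψ => M.sat w φ ∨ M.sat w ψ
  | w, Formula.imp φ ψ => ∀ u, M.R w u → M.sat u φ → M.sat u ψ

/-- the submodel on a subset of the worlds -/
def restrict (M : KStruct) (S : Set M.W) : KStruct where
  W := S
  R := fun a b => M.R a.1 b.1
  V := fun a p => M.V a.1 p

end KStruct

/-- monotonic map between Kripke structures: preserves the order and the colors -/
def Monotonic (M N : KStruct) (f : M.W → N.W) : Prop :=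
  (∀ w u, M.R w u → N.R (f w) (f u)) ∧ (∀ w p, N.V (f w) p = M.V w p)

/-- p-morphism: a monotonic map satisfying the forth condition -/
def PMorphism (M N : KStruct) (f : M.W → N.W) : Prop :=
  Monotonic M N f ∧ ∀ w u', N.R (f w) u' → ∃ u, M.R w u ∧ f u = u'

/-- MR: the class of formulas reflected by monotonic maps between Kripke models -/
def MR (φ : Formula) : Prop :=
  ∀ (N M : KStruct), N.IsModel → M.IsModel →
    ∀ f : N.W → M.W, Monotonic N M f → ∀ w : N.W, M.sat (f w) φ → N.sat w φ

/-- `r` is a root of `M` -/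
def IsRoot (M : KStruct) (r : M.W) : Prop := ∀ w, M.R r w

/-- `M` is tree-like with root `r`: rooted, and each point has a finite,
linearly ordered set of predecessors -/
def IsTree (M : KStruct) (r : M.W) : Prop :=
  IsRoot M r ∧ (∀ w : M.W, {u | M.R u w}.Finite) ∧
  (∀ w u v : M.W, M.R u w → M.R v w → (M.R u v ∨ M.R v u))

/-- `u` is an immediate (proper) successor of `w` -/
def ImmSucc (M : KStruct) (w u : M.W) : Prop :=
  M.R w u ∧ w ≠ u ∧ ∀ v, M.R w v → M.R v u → v = w ∨ v = u

/-- `S` carries a color-preserving submodel of `M` -/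
def ColorPresSub (M : KStruct) (S : Set M.W) : Prop :=
  ∀ w ∈ S, ∀ u, M.R w u → ∃ v ∈ S, M.R w v ∧ ∀ p, M.V v p = M.V u p

/-! ## The β-formulas of finite models -/

/-- the variables among `p_0,…,p_{n-1}` true at `w` -/
def propList (M : KStruct) (n : ℕ) (w : M.W) : List Formula :=
  ((List.range n).filter (fun p => M.V w p)).map Formula.var

/-- the variables among `p_0,…,p_{n-1}` false at `w` -/
def notpropList (M : KStruct) (n : ℕ) (w : M.W) : List Formula :=
  ((List.range n).filter (fun p => !(M.V w p))).map Formula.var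

open Classical in
/-- the immediate successors of `w`, as a list -/
noncomputable def immSuccList (M : KStruct) [Fintype M.W] (w : M.W) : List M.W :=
  (Finset.univ.filter (fun u => ImmSucc M w u)).toList

/-- β(w), defined by recursion on the depth of `w` (computed with enough fuel):
`β(w) = ⋀prop(w) → (⋁notprop(w) ∨ β(w_1) ∨ … ∨ β(w_k))` where the `w_i` are the
immediate successors of `w` (for maximal `w` the last disjunct is the empty disjunction). -/
noncomputable def betaFuel (M : KStruct) [Fintype M.W] (n : ℕ) : ℕ → M.W → Formula
  | 0, _ => Formula.bot
  | (k+1), w =>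
      Formula.imp (listAnd (propList M n w))
        (listOr (notpropList M n w ++ (immSuccList M w).map (fun u => betaFuel M n k u)))

/-- β(w) for a point `w` of a finite `n`-model: `Fintype.card M.W` is an upper bound
for the depth of any point, so the recursion above never runs out of fuel. -/
noncomputable def beta (M : KStruct) [inst : Fintype M.W] (n : ℕ) (w : M.W) : Formula :=
  betaFuel M n (Fintype.card M.W) w

/-! ## Unravelings -/

/-- the unraveling `T_N` of a rooted model `(N, r)`: points are the finite sequences
`⟨r, w_1, …, w_k⟩` in which each entry is an immediate successor of the preceding one,
ordered by the initial-segment relation; such a sequence satisfies the same variables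
as its last entry. -/
def Unravel (M : KStruct) (r : M.W) : KStruct where
  W := {l : List M.W // l.head? = some r ∧ List.Chain' (ImmSucc M) l}
  R := fun σ τ => σ.1 <+: τ.1
  V := fun σ p => (σ.1.getLast?.map (fun w => M.V w p)).getD false

/-! ## Kripke frames -/

structure KFrame where
  W : Type
  R : W → W → Prop

namespace KFrame

/-- a Kripke frame: `R` is a partial order -/
def IsFrame (F : KFrame) : Prop :=
  (∀ w, F.R w w) ∧ (∀ w u v, F.R w u → F.R u v → F.R w v) ∧
  (∀ w u, F.R w u → F.R u w → w = u)

def Persistent (F : KFrame) (V : F.W → ℕ → Bool) : Prop :=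
  ∀ w u p, F.R w u → V w p = true → V u p = true

/-- the model on `F` given by a valuation -/
def model (F : KFrame) (V : F.W → ℕ → Bool) : KStruct := ⟨F.W, F.R, V⟩

/-- `F ⊨ φ` : `φ` is true at every point of every model on `F` -/
def valid (F : KFrame) (φ : Formula) : Prop :=
  ∀ V, F.Persistent V → ∀ w, (F.model V).sat w φ

/-- the substructure of `F` on a subset `S` of its domain, with the restricted order -/
def restrictF (F : KFrame) (S : Set F.W) : KFrame :=
  ⟨S, fun a b => F.R a.1 b.1⟩

end KFrame

/-- a monotonic map from a model `N` into a frame `F` which is color-consistent: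
`f(w) R f(u)` implies `col(w) ≤ col(u)` -/
def ColorConsistentMap (N : KStruct) (F : KFrame) (f : N.W → F.W) : Prop :=
  (∀ w u, N.R w u → F.R (f w) (f u)) ∧
  (∀ w u, F.R (f w) (f u) → ∀ p, N.V w p = true → N.V u p = true)


/-! ## The n-universal model 𝒯(n) for NNIL -/

/-- an `n`-color -/
abbrev Col (n : ℕ) := Fin n → Bool

/-- componentwise order on colors -/
def ColLE {n : ℕ} (c d : Col n) : Prop := ∀ i, c i = true → d i = true

def ColLT {n : ℕ} (c d : Col n) : Prop := ColLE c d ∧ c ≠ d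

/-- finite colored trees: a root color together with the list of subtrees
hanging above the root -/
inductive CTree (n : ℕ) : Type
  | node : Col n → List (CTree n) → CTree n

namespace CTree

variable {n : ℕ}

def color : CTree n → Col n
  | node c _ => c

def children : CTree n → List (CTree n)
  | node _ ts => ts

/-- the subtree of `t` at a position (a list of child indices) -/
def subt : List ℕ → CTree n → Option (CTree n)
  | [], t => some t
  | i :: l, t => (t.children[i]?).bind (subt l)

/-- the finite tree-like `n`-model determined by a colored tree: its worlds are
the positions of `t`, ordered by the initial-segment relation, and a position
satisfies `p_i` iff the color of the subtree there is `1` at `i`. -/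
def toModel (t : CTree n) : KStruct where
  W := {l : List ℕ // (subt l t).isSome = true}
  R := fun a b => a.1 <+: b.1
  V := fun a p =>
    if h : p < n then ((subt a.1 t).map (fun s => s.color ⟨p, h⟩)).getD false
    else false

/-- the root of the model of a tree -/
def root (t : CTree n) : t.toModel.W := ⟨[], rfl⟩

/-- an injective code of colors -/
def colCode (c : Col n) : ℕ := ∑ i : Fin n, (if c i then 2 ^ (i : ℕ) else 0)

/-- an injective code of lists of numbers -/
def listCode : List ℕ → ℕ
  | [] => 0
  | a :: l => Nat.pair a (listCode l) + 1

/-- an injective code of colored trees, used to order the children of every node of a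
tree in the universal model canonically -/
def code : CTree n → ℕ
  | node c ts => Nat.pair (colCode c) (listCode (ts.attach.map (fun x => code x.1)))
decreasing_by
  have := List.sizeOf_lt_of_mem x.2
  simp only [CTree.node.sizeOf_spec]
  omega

end CTree

/-- `MLE s t` (`s ≤ t`): there is a monotonic map from (the model of) `t` into `s` -/
def MLE {n : ℕ} (s t : CTree n) : Prop :=
  ∃ f : t.toModel.W → s.toModel.W, Monotonic t.toModel s.toModel f

/-- membership in the domain of the universal model `𝒯(n)`, built in layers:
layer 1 consists of the one-point trees (one for each color); a tree of a later layer
is built from a set `X` of pairwise `≤`-incomparable trees of earlier layers (encoded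
as a list sorted canonically by `code`) by adding a fresh root below whose color is
strictly smaller than every color occurring in the trees of `X`. -/
inductive UMem : {n : ℕ} → CTree n → Prop
  | single {n : ℕ} (c : Col n) : UMem (CTree.node c [])
  | step {n : ℕ} (c : Col n) (ts : List (CTree n)) :
      ts ≠ [] →
      (∀ t ∈ ts, UMem t) →
      List.Chain' (fun a b => CTree.code a < CTree.code b) ts →
      (∀ t ∈ ts, ∀ s ∈ ts, t ≠ s → ¬ MLE t s) →
      (∀ t ∈ ts, ∀ (l : List ℕ) (s : CTree n), CTree.subt l t = some s →
        ColLT c s.color) →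
      UMem (CTree.node c ts)

/-- the universal model `𝒯(n)`: its points are the trees in `UMem`, ordered by `≤`
(where `T_w ≤ T_u` iff there is a monotonic map from `T_u` into `T_w`), and the color
of a node is the color of the root of the corresponding tree. -/
def UnivModel (n : ℕ) : KStruct where
  W := {t : CTree n // UMem t}
  R := fun a b => MLE a.1 b.1
  V := fun a p => if h : p < n then a.1.color ⟨p, h⟩ else false

/-- mutual monotonic mappability (`≡`) of Kripke structures -/
def MEquiv (A B : KStruct) : Prop :=
  (∃ f : B.W → A.W, Monotonic B A f) ∧ (∃ g : A.W → B.W, Monotonic A B g)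

/-!
The reduction is built by induction on the cone above a point `w` of `M`. The cones above the
immediate successors `u` of `w` reduce to trees `T u` of the universal model; put them side by
side above a root of the color of `w`. In the resulting tree collapse onto the root every
position that still has the root color: the subtrees at the minimal positions of another color
(the cut points) then hang directly above the root, and by persistence all their colors lie
strictly above the root color. Finally replace these pieces by a `≤`-antichain of them such that
every piece is `≥` one of its members, listed by increasing code. Each step maps the old tree
monotonically onto the new one and embeds the new tree back into the old one, root to root, and
such reductions compose.
-/

open Classical

variable {n : ℕ}

def colVal (c : Col n) (p : ℕ) : Bool := if h : p < n then c ⟨p, h⟩ else false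

lemma colVal_eq_true {c : Col n} {i : Fin n} : colVal c i = true ↔ c i = true := by
  simp [colVal]

lemma colVal_of_bound {V : ℕ → Bool} (h : ∀ p, n ≤ p → V p = false) :
    colVal (fun i : Fin n => V i) = V := by
  funext p
  by_cases hp : p < n
  · simp [colVal, hp]
  · simp [colVal, hp, h p (not_lt.mp hp)]

lemma ColLE.antisymm {c d : Col n} (hcd : ColLE c d) (hdc : ColLE d c) : c = d := by
  funext i
  cases hc : c i <;> cases hd : d i <;> simp_all [ColLE]

lemma wellFounded_strict_of_finite {α : Type*} [Finite α] {R : α → α → Prop}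
    (htrans : ∀ a b c, R a b → R b c → R a c) (hanti : ∀ a b, R a b → R b a → a = b) :
    WellFounded fun a b => R a b ∧ a ≠ b := by
  have : IsTrans α (fun a b => R a b ∧ a ≠ b) :=
    ⟨fun a b c ⟨hab, hne⟩ ⟨hbc, _⟩ =>
      ⟨htrans a b c hab hbc, by rintro rfl; exact hne (hanti a b hab hbc)⟩⟩
  have : Std.Irrefl (fun a b : α => R a b ∧ a ≠ b) := ⟨fun a h => h.2 rfl⟩
  exact Finite.wellFounded_of_trans_of_irrefl _

lemma exists_minimal_of_finite {α : Type*} [Finite α] {R : α → α → Prop}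
    (hrefl : ∀ a, R a a) (htrans : ∀ a b c, R a b → R b c → R a c)
    (hanti : ∀ a b, R a b → R b a → a = b) {P : α → Prop} {a : α} (ha : P a) :
    ∃ p, P p ∧ R p a ∧ ∀ b, P b → R b p → b = p := by
  obtain ⟨p, ⟨hp, hpa⟩, hmin⟩ :=
    (wellFounded_strict_of_finite htrans hanti).has_min {b | P b ∧ R b a} ⟨a, ha, hrefl a⟩
  refine ⟨p, hp, hpa, fun b hb hbp => ?_⟩
  by_contra hne
  exact hmin b ⟨hb, htrans b p a hbp hpa⟩ ⟨hbp, hne⟩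

lemma List.Nodup.idxOf_eq_of_getElem? {α : Type*} [BEq α] [LawfulBEq α] {l : List α}
    (hl : l.Nodup) {i : ℕ} {a : α} (h : l[i]? = some a) : l.idxOf a = i := by
  obtain ⟨hi, rfl⟩ := List.getElem?_eq_some_iff.mp h
  exact hl.idxOf_getElem i hi

lemma List.eq_of_map_eq_of_injOn {α β : Type*} {f : α → β} :
    ∀ {l₁ l₂ : List α}, (∀ x ∈ l₁, ∀ y, f x = f y → x = y) →
      l₁.map f = l₂.map f → l₁ = l₂
  | [], [], _, _ => rfl
  | _ :: _, [], _, h | [], _ :: _, _, h => by simp at h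
  | x :: l₁, y :: l₂, hf, h => by
    obtain ⟨hxy, h⟩ := List.cons_eq_cons.mp h
    rw [hf x List.mem_cons_self y hxy,
      List.eq_of_map_eq_of_injOn (fun z hz => hf z (List.mem_cons_of_mem x hz)) h]

lemma exists_antichain_cover {α : Type*} {r : α → α → Prop} (hrefl : ∀ a, r a a)
    (htrans : ∀ a b c, r a b → r b c → r a c) (s : Finset α) :
    ∃ X ⊆ s, IsAntichain r (X : Set α) ∧ ∀ a ∈ s, ∃ x ∈ X, r x a := by
  induction s using Finset.induction_on with
  | empty => exact ⟨∅, subset_rfl, by simp, by simp⟩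
  | insert a s _ ih =>
    obtain ⟨X, hXs, hX, hcov⟩ := ih
    by_cases ha : ∃ x ∈ X, r x a
    · refine ⟨X, hXs.trans (Finset.subset_insert a s), hX, fun b hb => ?_⟩
      rcases Finset.mem_insert.mp hb with rfl | hb
      exacts [ha, hcov b hb]
    simp only [not_exists, not_and] at ha
    refine ⟨insert a (X.filter (¬ r a ·)),
      Finset.insert_subset_insert a ((Finset.filter_subset _ _).trans hXs), ?_, fun b hb => ?_⟩
    · rw [Finset.coe_insert, Finset.coe_filter]
      exact (hX.subset fun x hx => hx.1).insert (fun b hb _ => ha b hb.1) (fun b hb _ => hb.2)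
    rcases Finset.mem_insert.mp hb with rfl | hb
    · exact ⟨b, Finset.mem_insert_self _ _, hrefl b⟩
    obtain ⟨x, hx, hxb⟩ := hcov b hb
    by_cases hax : r a x
    · exact ⟨a, Finset.mem_insert_self _ _, htrans _ _ _ hax hxb⟩
    · exact ⟨x, Finset.mem_insert_of_mem (Finset.mem_filter.mpr ⟨hx, hax⟩), hxb⟩

/-! ### Reductions between Kripke models -/

def KStruct.Persistent (M : KStruct) : Prop :=
  ∀ w u p, M.R w u → M.V w p = true → M.V u p = true

def MonotonicOntoAbove (M N : KStruct) (w : M.W) (f : M.W → N.W) : Prop :=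
  (∀ v u, M.R w v → M.R v u → N.R (f v) (f u)) ∧ (∀ v, M.R w v → N.V (f v) = M.V v) ∧
    ∀ b, ∃ v, M.R w v ∧ f v = b

def IsEmbedding (N M : KStruct) (g : N.W → M.W) : Prop :=
  (∀ a b, N.R a b ↔ M.R (g a) (g b)) ∧ ∀ a, M.V (g a) = N.V a

def ReducesTo (M : KStruct) (w : M.W) (N : KStruct) (s : N.W) : Prop :=
  (∃ f, MonotonicOntoAbove M N w f) ∧ ∃ g, IsEmbedding N M g ∧ g s = w

lemma ReducesTo.trans {M N K : KStruct} {w : M.W} {s : N.W} {k : K.W}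
    (h₁ : ReducesTo M w N s) (hs : IsRoot N s) (h₂ : ReducesTo N s K k) :
    ReducesTo M w K k := by
  obtain ⟨⟨f₁, hf₁R, hf₁V, hf₁S⟩, g₁, ⟨hg₁R, hg₁V⟩, hg₁s⟩ := h₁
  obtain ⟨⟨f₂, hf₂R, hf₂V, hf₂S⟩, g₂, ⟨hg₂R, hg₂V⟩, hg₂k⟩ := h₂
  refine ⟨⟨f₂ ∘ f₁, fun v u hv hvu => hf₂R _ _ (hs _) (hf₁R v u hv hvu),
    fun v hv => (hf₂V _ (hs _)).trans (hf₁V v hv), fun b => ?_⟩,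
    g₁ ∘ g₂,
    ⟨fun a b => (hg₂R a b).trans (hg₁R _ _), fun a => (hg₁V _).trans (hg₂V a)⟩,
    by simp [hg₂k, hg₁s]⟩
  obtain ⟨x, -, rfl⟩ := hf₂S b
  obtain ⟨v, hv, rfl⟩ := hf₁S x
  exact ⟨v, hv, rfl⟩

lemma IsEmbedding.persistent {N M : KStruct} {g : N.W → M.W} (hg : IsEmbedding N M g)
    (hM : M.Persistent) : N.Persistent := by
  intro a b p hab ha
  rw [← hg.2 b]
  exact hM _ _ p ((hg.1 a b).mp hab) (by rwa [hg.2 a])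

lemma IsEmbedding.injective {N M : KStruct} {g : N.W → M.W} (hg : IsEmbedding N M g)
    (hanti : ∀ a b, N.R a b → N.R b a → a = b) (hrefl : ∀ v, M.R v v) :
    Function.Injective g := fun a b hab =>
  hanti a b ((hg.1 a b).mpr (hab ▸ hrefl _)) ((hg.1 b a).mpr (hab ▸ hrefl _))

lemma MonotonicOntoAbove.finite {M N : KStruct} [Finite M.W] {w : M.W} {f : M.W → N.W}
    (hf : MonotonicOntoAbove M N w f) : Finite N.W :=
  Finite.of_surjective f fun b => (hf.2.2 b).imp fun _ h => h.2

lemma monotonic_id (M : KStruct) : Monotonic M M id := ⟨fun _ _ h => h, fun _ _ => rfl⟩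

lemma MLE.refl (t : CTree n) : MLE t t := ⟨id, monotonic_id _⟩

lemma MLE.trans {s t u : CTree n} (hst : MLE s t) (htu : MLE t u) : MLE s u := by
  obtain ⟨f, hf⟩ := hst
  obtain ⟨g, hg⟩ := htu
  exact ⟨f ∘ g, fun a b h => hf.1 _ _ (hg.1 a b h), fun a p => (hf.2 _ p).trans (hg.2 a p)⟩

/-! ### Positions in colored trees -/

namespace CTree

lemma subt_append (l m : List ℕ) (t : CTree n) : subt (l ++ m) t = (subt l t).bind (subt m) := by
  induction l generalizing t with
  | nil => rfl
  | cons i l ih => simp only [List.cons_append, subt, ih, Option.bind_assoc]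

lemma subt_node_cons (c : Col n) (ts : List (CTree n)) (i : ℕ) (l : List ℕ) :
    subt (i :: l) (node c ts) = ts[i]?.bind (subt l) := rfl

def sub (t : CTree n) (a : t.toModel.W) : CTree n := (subt a.1 t).get a.2

lemma exists_of_isSome_subt_cons {c : Col n} {ts : List (CTree n)} {i : ℕ} {l : List ℕ}
    (h : (subt (i :: l) (node c ts)).isSome) : ∃ x, ts[i]? = some x ∧ (subt l x).isSome := by
  rw [subt_node_cons] at h
  cases hi : ts[i]? with
  | none => simp [hi] at h
  | some x => exact ⟨x, rfl, by rwa [hi, Option.bind_some] at h⟩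

lemma exists_of_isSome_subt_cons_map {α : Type*} {c : Col n} {xs : List α} {φ : α → CTree n}
    {i : ℕ} {l : List ℕ} (h : (subt (i :: l) (node c (xs.map φ))).isSome) :
    ∃ a, xs[i]? = some a ∧ (subt l (φ a)).isSome := by
  obtain ⟨x, hx, hl⟩ := exists_of_isSome_subt_cons h
  rw [List.getElem?_map, Option.map_eq_some_iff] at hx
  obtain ⟨a, ha, rfl⟩ := hx
  exact ⟨a, ha, hl⟩

lemma lt_length_of_isSome_subt_cons {c : Col n} {ts : List (CTree n)} {i : ℕ} {l : List ℕ}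
    (h : (subt (i :: l) (node c ts)).isSome) : i < ts.length := by
  obtain ⟨x, hx, -⟩ := exists_of_isSome_subt_cons h
  exact (List.getElem?_eq_some_iff.mp hx).1

lemma isSome_subt_getElem {c : Col n} {ts : List (CTree n)} {i : ℕ} {l : List ℕ}
    (h : (subt (i :: l) (node c ts)).isSome) :
    (subt l (ts[i]'(lt_length_of_isSome_subt_cons h))).isSome := by
  obtain ⟨x, hx, hl⟩ := exists_of_isSome_subt_cons h
  rwa [(List.getElem?_eq_some_iff.mp hx).2]

variable {t : CTree n}

lemma subt_eq_sub (a : t.toModel.W) : subt a.1 t = some (t.sub a) := (Option.some_get a.2).symm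

lemma sub_root : t.sub t.root = t := rfl

lemma subt_append_sub (a : t.toModel.W) (l : List ℕ) : subt (a.1 ++ l) t = subt l (t.sub a) := by
  rw [subt_append, subt_eq_sub, Option.bind_some]

lemma subt_sub_of_R {a b : t.toModel.W} (hab : t.toModel.R a b) :
    subt (b.1.drop a.1.length) (t.sub a) = some (t.sub b) := by
  obtain ⟨k, hk⟩ := hab
  rw [← hk, List.drop_left, ← subt_append_sub, hk]
  exact subt_eq_sub b

lemma toModel_V_eq_of_subt {a : t.toModel.W} {s : CTree n} (h : subt a.1 t = some s) :
    t.toModel.V a = colVal s.color := by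
  funext p
  simp [toModel, h, colVal]

lemma toModel_V_eq (a : t.toModel.W) : t.toModel.V a = colVal (t.sub a).color :=
  toModel_V_eq_of_subt (subt_eq_sub a)

lemma toModel_V_node_cons {c : Col n} {ts : List (CTree n)} {i : ℕ} {x : CTree n}
    (hx : ts[i]? = some x) (a : (node c ts).toModel.W) (b : x.toModel.W) (h : a.1 = i :: b.1) :
    (node c ts).toModel.V a = x.toModel.V b := by
  rw [toModel_V_eq b]
  exact toModel_V_eq_of_subt (by rw [h, subt_node_cons, hx, Option.bind_some, subt_eq_sub])

lemma isRoot_root : IsRoot t.toModel t.root := fun _ => List.nil_prefix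

lemma eq_root_of_nil {a : t.toModel.W} (h : a.1 = []) : a = t.root := Subtype.ext h

lemma toModel_R_antisymm (a b : t.toModel.W) (hab : t.toModel.R a b) (hba : t.toModel.R b a) :
    a = b :=
  Subtype.ext (hab.eq_of_length (le_antisymm hab.length_le hba.length_le))

lemma toModel_R_trans (a b c : t.toModel.W) (hab : t.toModel.R a b) (hbc : t.toModel.R b c) :
    t.toModel.R a c :=
  List.IsPrefix.trans hab hbc

lemma colLE_of_persistent (ht : t.toModel.Persistent) {a b : t.toModel.W}
    (hab : t.toModel.R a b) : ColLE (t.sub a).color (t.sub b).color := by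
  intro i hi
  have := ht a b i hab (by rw [toModel_V_eq]; exact colVal_eq_true.mpr hi)
  rwa [toModel_V_eq, colVal_eq_true] at this

end CTree

/-! ### Gluing the trees of the successor cones -/

section Glue

variable {M : KStruct}

lemma exists_immSucc_R [Finite M.W] (hM : M.IsModel) {w v : M.W} (hwv : M.R w v) (hne : w ≠ v) :
    ∃ u, ImmSucc M w u ∧ M.R u v := by
  obtain ⟨u, ⟨hwu, hne'⟩, huv, hmin⟩ := exists_minimal_of_finite hM.1 hM.2.1 hM.2.2.1
    (P := fun u => M.R w u ∧ w ≠ u) ⟨hwv, hne⟩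
  refine ⟨u, ⟨hwu, hne', fun x hwx hxu => ?_⟩, huv⟩
  by_cases hxw : x = w
  · exact Or.inl hxw
  · exact Or.inr (hmin x ⟨hwx, Ne.symm hxw⟩ hxu)

lemma ImmSucc.eq_of_R_of_R
    (hlin : ∀ v a b : M.W, M.R a v → M.R b v → M.R a b ∨ M.R b a) {w u u' v : M.W}
    (hu : ImmSucc M w u) (hu' : ImmSucc M w u') (huv : M.R u v) (hu'v : M.R u' v) : u = u' := by
  rcases hlin v u u' huv hu'v with h | h
  · exact (hu'.2.2 u hu.1 h).resolve_left (Ne.symm hu.2.1)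
  · exact ((hu.2.2 u' hu'.1 h).resolve_left (Ne.symm hu'.2.1)).symm

lemma mem_immSuccList [Fintype M.W] {w u : M.W} : u ∈ immSuccList M w ↔ ImmSucc M w u := by
  simp [immSuccList]

lemma exists_monotonicOntoAbove_glue [Fintype M.W] (hM : M.IsModel)
    (hlin : ∀ v a b : M.W, M.R a v → M.R b v → M.R a b ∨ M.R b a) {w : M.W}
    {c : Col n} (hc : colVal c = M.V w) (T : M.W → CTree n)
    (hT : ∀ u, ImmSucc M w u → ∃ f, MonotonicOntoAbove M (T u).toModel u f) :
    ∃ f, MonotonicOntoAbove M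
      (CTree.node c ((immSuccList M w).map T)).toModel w f := by
  set us := immSuccList M w
  set G := CTree.node c (us.map T)
  have hnd : us.Nodup := Finset.nodup_toList _
  choose F hF using hT
  have hbelow : ∀ v, ∃ u, M.R w v ∧ w ≠ v → ImmSucc M w u ∧ M.R u v := fun v =>
    if h : M.R w v ∧ w ≠ v then (exists_immSucc_R hM h.1 h.2).imp fun _ hu _ => hu
    else ⟨w, fun h' => absurd h' h⟩
  choose U hU using hbelow
  have hTmem : ∀ u, ImmSucc M w u → (us.map T)[us.idxOf u]? = some (T u) := fun u hu => by
    rw [List.getElem?_map, List.getElem?_idxOf (mem_immSuccList.mpr hu), Option.map_some]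
  let f : M.W → G.toModel.W := fun v =>
    if h : M.R w v ∧ w ≠ v then
      ⟨us.idxOf (U v) :: (F (U v) (hU v h).1 v).1, by
        rw [CTree.subt_node_cons, hTmem _ (hU v h).1, Option.bind_some]
        exact (F (U v) (hU v h).1 v).2⟩
    else G.root
  have hfw : f w = G.root := dif_neg fun h => h.2 rfl
  have hf : ∀ v u (hu : ImmSucc M w u), M.R u v →
      (f v).1 = us.idxOf u :: (F u hu v).1 := by
    intro v u hu huv
    have hv : M.R w v ∧ w ≠ v :=
      ⟨hM.2.1 _ _ _ hu.1 huv, fun h => hu.2.1 (hM.2.2.1 _ _ hu.1 (h ▸ huv))⟩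
    obtain rfl := hu.eq_of_R_of_R hlin (hU v hv).1 huv (hU v hv).2
    simp [f, hv]
  refine ⟨f, fun v x hwv hvx => ?_, fun v hwv => ?_, fun b => ?_⟩
  · by_cases hw : w = v
    · subst hw
      rw [hfw]
      exact CTree.isRoot_root _
    obtain ⟨u, hu, huv⟩ := exists_immSucc_R hM hwv hw
    show (f v).1 <+: (f x).1
    rw [hf v u hu huv, hf x u hu (hM.2.1 _ _ _ huv hvx)]
    exact List.cons_prefix_cons.mpr ⟨rfl, (hF u hu).1 v x huv hvx⟩
  · by_cases hw : w = v
    · subst hw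
      rw [hfw, CTree.toModel_V_eq, CTree.sub_root]
      exact hc
    obtain ⟨u, hu, huv⟩ := exists_immSucc_R hM hwv hw
    rw [CTree.toModel_V_node_cons (hTmem u hu) (f v) (F u hu v) (hf v u hu huv)]
    exact (hF u hu).2.1 v huv
  · obtain ⟨_ | ⟨i, l⟩, hb⟩ := b
    · exact ⟨w, hM.1 w, hfw⟩
    obtain ⟨u, hi, hl⟩ := CTree.exists_of_isSome_subt_cons_map hb
    have hu : ImmSucc M w u := mem_immSuccList.mp (List.mem_of_getElem? hi)
    obtain ⟨v, huv, hv⟩ := (hF u hu).2.2 ⟨l, hl⟩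
    refine ⟨v, hM.2.1 _ _ _ hu.1 huv, Subtype.ext ?_⟩
    rw [hf v u hu huv, hv, hnd.idxOf_eq_of_getElem? hi]

lemma exists_embedding_glue [Fintype M.W] (hM : M.IsModel)
    (hlin : ∀ v a b : M.W, M.R a v → M.R b v → M.R a b ∨ M.R b a) {w : M.W}
    {c : Col n} (hc : colVal c = M.V w) (T : M.W → CTree n)
    (hT : ∀ u, ImmSucc M w u → ∃ g, IsEmbedding (T u).toModel M g ∧ g (T u).root = u) :
    ∃ g, IsEmbedding
      (CTree.node c ((immSuccList M w).map T)).toModel M g ∧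
      g (CTree.root _) = w := by
  set us := immSuccList M w
  set G := CTree.node c (us.map T)
  have hnd : us.Nodup := Finset.nodup_toList _
  choose g hg hgroot using hT
  have hgR : ∀ u hu (a : (T u).toModel.W), M.R u (g u hu a) := fun u hu a => by
    simpa only [hgroot] using ((hg u hu).1 _ a).mp (CTree.isRoot_root a)
  have hus : ∀ {i} (hi : i < us.length), ImmSucc M w us[i] := fun hi =>
    mem_immSuccList.mp (List.getElem_mem hi)
  have hlt : ∀ {i l}, (CTree.subt (i :: l) G).isSome → i < us.length := fun h => by
    simpa using CTree.lt_length_of_isSome_subt_cons h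
  have hpos : ∀ {i l} (h : (CTree.subt (i :: l) G).isSome),
      (CTree.subt l (T (us[i]'(hlt h)))).isSome := fun h => by
    simpa using CTree.isSome_subt_getElem h
  let e : G.toModel.W → M.W := fun
    | ⟨[], _⟩ => w
    | ⟨i :: l, h⟩ => g _ (hus (hlt h)) ⟨l, hpos h⟩
  refine ⟨e, ⟨fun a b => ?_, fun a => ?_⟩, rfl⟩
  · obtain ⟨_ | ⟨i, l⟩, ha⟩ := a
    · refine iff_of_true List.nil_prefix ?_
      obtain ⟨_ | ⟨j, m⟩, hb⟩ := b
      exacts [hM.1 w, hM.2.1 _ _ _ (hus (hlt hb)).1 (hgR _ _ _)]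
    obtain ⟨_ | ⟨j, m⟩, hb⟩ := b
    · refine iff_of_false (fun h => List.cons_ne_nil i l (List.prefix_nil.mp h)) fun h => ?_
      have hu := hus (hlt ha)
      exact hu.2.1 (hM.2.2.1 _ _ hu.1 (hM.2.1 _ _ _ (hgR _ _ _) h))
    show i :: l <+: j :: m ↔ M.R (g _ _ ⟨l, hpos ha⟩) (g _ _ ⟨m, hpos hb⟩)
    rw [List.cons_prefix_cons]
    constructor
    · rintro ⟨rfl, hlm⟩
      exact ((hg _ _).1 ⟨l, hpos ha⟩ ⟨m, hpos hb⟩).mp hlm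
    · intro h
      obtain rfl : i = j := hnd.getElem_inj_iff.mp <| (hus (hlt ha)).eq_of_R_of_R hlin
        (hus (hlt hb)) (hM.2.1 _ _ _ (hgR _ _ _) h) (hgR _ _ _)
      exact ⟨rfl, ((hg _ _).1 ⟨l, hpos ha⟩ ⟨m, hpos hb⟩).mpr h⟩
  · obtain ⟨_ | ⟨i, l⟩, ha⟩ := a
    · show M.V w = G.toModel.V G.root
      rw [CTree.toModel_V_eq, CTree.sub_root]
      exact hc.symm
    refine ((hg _ _).2 ⟨l, hpos ha⟩).trans (CTree.toModel_V_node_cons ?_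
      (⟨i :: l, ha⟩ : G.toModel.W) ⟨l, hpos ha⟩ rfl).symm
    rw [List.getElem?_map, List.getElem?_eq_getElem (hlt ha), Option.map_some]

end Glue

/-! ### Collapsing everything below the first change of color -/

namespace CTree

variable {t : CTree n}

def IsCutPoint (t : CTree n) (a : t.toModel.W) : Prop :=
  (t.sub a).color ≠ t.color ∧ ∀ b, t.toModel.R b a → b ≠ a → (t.sub b).color = t.color

lemma IsCutPoint.ne_nil {p : t.toModel.W} (hp : IsCutPoint t p) : p.1 ≠ [] := fun h =>
  hp.1 (by rw [eq_root_of_nil h, sub_root])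

lemma IsCutPoint.eq_of_R {p q a : t.toModel.W} (hp : IsCutPoint t p) (hq : IsCutPoint t q)
    (hpa : t.toModel.R p a) (hqa : t.toModel.R q a) : p = q := by
  by_contra hne
  rcases List.prefix_or_prefix_of_prefix hpa hqa with h | h
  · exact hp.1 (hq.2 p h hne)
  · exact hq.1 (hp.2 q h (Ne.symm hne))

lemma IsCutPoint.color_ne_of_R (ht : t.toModel.Persistent) {p a : t.toModel.W}
    (hp : IsCutPoint t p) (hpa : t.toModel.R p a) : (t.sub a).color ≠ t.color := by
  intro h
  have hpa' := colLE_of_persistent ht hpa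
  rw [h] at hpa'
  exact hp.1 (hpa'.antisymm (colLE_of_persistent ht (isRoot_root p)))

lemma exists_cutPoint_R [Finite t.toModel.W] {a : t.toModel.W} (ha : (t.sub a).color ≠ t.color) :
    ∃ p, IsCutPoint t p ∧ t.toModel.R p a := by
  obtain ⟨p, hp, hpa, hmin⟩ := exists_minimal_of_finite (R := t.toModel.R)
    (fun a => List.prefix_refl a.1) toModel_R_trans toModel_R_antisymm
    (P := fun b => (t.sub b).color ≠ t.color) ha
  exact ⟨p, ⟨hp, fun b hbp hne => by_contra fun h => hne (hmin b h hbp)⟩, hpa⟩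

noncomputable def cutPoints (t : CTree n) [Finite t.toModel.W] : List t.toModel.W :=
  (Set.toFinite {a | IsCutPoint t a}).toFinset.toList

noncomputable def cutPieces (t : CTree n) [Finite t.toModel.W] : List (CTree n) :=
  (cutPoints t).map t.sub

variable [Finite t.toModel.W]

lemma mem_cutPoints {a : t.toModel.W} : a ∈ cutPoints t ↔ IsCutPoint t a := by
  simp [cutPoints]

lemma nodup_cutPoints : (cutPoints t).Nodup := Finset.nodup_toList _

lemma exists_monotonicOntoAbove_cut (ht : t.toModel.Persistent) :
    ∃ f, MonotonicOntoAbove t.toModel (node t.color (cutPieces t)).toModel t.root f := by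
  set N := node t.color (cutPieces t)
  have hcut : ∀ a, ∃ p, (t.sub a).color ≠ t.color → IsCutPoint t p ∧ t.toModel.R p a :=
    fun a => if ha : (t.sub a).color ≠ t.color then (exists_cutPoint_R ha).imp fun _ h _ => h
    else ⟨a, fun h => absurd h ha⟩
  choose cut hcut using hcut
  have hpiece : ∀ p, IsCutPoint t p →
      (cutPieces t)[(cutPoints t).idxOf p]? = some (t.sub p) := fun p hp => by
    rw [cutPieces, List.getElem?_map, List.getElem?_idxOf (mem_cutPoints.mpr hp), Option.map_some]
  let f : t.toModel.W → N.toModel.W := fun a =>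
    if h : (t.sub a).color ≠ t.color then
      ⟨(cutPoints t).idxOf (cut a) :: a.1.drop (cut a).1.length, by
        rw [subt_node_cons, hpiece _ (hcut a h).1, Option.bind_some, subt_sub_of_R (hcut a h).2]
        rfl⟩
    else N.root
  have hf : ∀ a p, IsCutPoint t p → t.toModel.R p a →
      (f a).1 = (cutPoints t).idxOf p :: a.1.drop p.1.length := by
    intro a p hp hpa
    have ha := hp.color_ne_of_R ht hpa
    obtain rfl := hp.eq_of_R (hcut a ha).1 hpa (hcut a ha).2
    simp [f, ha]
  have hfc : ∀ a, (t.sub a).color = t.color → f a = N.root := fun a ha =>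
    dif_neg (not_not.mpr ha)
  refine ⟨f, fun a b _ hab => ?_, fun a _ => ?_, fun b => ?_⟩
  · by_cases ha : (t.sub a).color = t.color
    · rw [hfc a ha]
      exact isRoot_root _
    obtain ⟨hp, hpa⟩ := hcut a ha
    show (f a).1 <+: (f b).1
    rw [hf a _ hp hpa, hf b _ hp (toModel_R_trans _ _ _ hpa hab)]
    exact List.cons_prefix_cons.mpr ⟨rfl, hab.drop _⟩
  · by_cases ha : (t.sub a).color = t.color
    · rw [hfc a ha, toModel_V_eq, toModel_V_eq, ha, sub_root]
      rfl
    obtain ⟨hp, hpa⟩ := hcut a ha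
    let a' : (t.sub (cut a)).toModel.W :=
      ⟨a.1.drop (cut a).1.length, by rw [subt_sub_of_R hpa]; rfl⟩
    rw [toModel_V_node_cons (hpiece _ hp) (f a) a' (hf a _ hp hpa),
      toModel_V_eq_of_subt (a := a') (subt_sub_of_R hpa), toModel_V_eq]
  · obtain ⟨_ | ⟨k, l⟩, hb⟩ := b
    · exact ⟨t.root, isRoot_root _, hfc _ rfl⟩
    obtain ⟨p, hk, hl⟩ := exists_of_isSome_subt_cons_map hb
    have hp : IsCutPoint t p := mem_cutPoints.mp (List.mem_of_getElem? hk)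
    let a : t.toModel.W := ⟨p.1 ++ l, by rwa [subt_append_sub]⟩
    refine ⟨a, isRoot_root _, Subtype.ext ?_⟩
    rw [hf a p hp (List.prefix_append _ _), nodup_cutPoints.idxOf_eq_of_getElem? hk, List.drop_left]

lemma exists_embedding_cut :
    ∃ g, IsEmbedding (node t.color (cutPieces t)).toModel t.toModel g ∧
      g (root _) = t.root := by
  set N := node t.color (cutPieces t)
  have hlt : ∀ {k l}, (subt (k :: l) N).isSome → k < (cutPoints t).length := fun h => by
    simpa [cutPieces] using lt_length_of_isSome_subt_cons h
  have hpos : ∀ {k l} (h : (subt (k :: l) N).isSome),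
      (subt l (t.sub ((cutPoints t)[k]'(hlt h)))).isSome := fun h => by
    simpa [cutPieces] using isSome_subt_getElem h
  have hcut : ∀ {k} (hk : k < (cutPoints t).length), IsCutPoint t (cutPoints t)[k] := fun hk =>
    mem_cutPoints.mp (List.getElem_mem hk)
  let g : N.toModel.W → t.toModel.W := fun
    | ⟨[], _⟩ => t.root
    | ⟨k :: l, h⟩ =>
      ⟨((cutPoints t)[k]'(hlt h)).1 ++ l, by rw [subt_append_sub]; exact hpos h⟩
  refine ⟨g, ⟨fun a b => ?_, fun a => ?_⟩, rfl⟩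
  · obtain ⟨_ | ⟨k, l⟩, ha⟩ := a
    · exact iff_of_true List.nil_prefix List.nil_prefix
    obtain ⟨_ | ⟨k', l'⟩, hb⟩ := b
    · exact iff_of_false (fun h => List.cons_ne_nil k l (List.prefix_nil.mp h)) fun h =>
        (hcut (hlt ha)).ne_nil (List.prefix_nil.mp ((List.prefix_append _ _).trans h))
    show k :: l <+: k' :: l' ↔ _ ++ l <+: _ ++ l'
    rw [List.cons_prefix_cons]
    constructor
    · rintro ⟨rfl, h⟩
      exact (List.prefix_append_right_inj _).mpr h
    · intro h
      obtain rfl : k = k' := nodup_cutPoints.getElem_inj_iff.mp <|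
        (hcut (hlt ha)).eq_of_R (a := g ⟨k' :: l', hb⟩) (hcut (hlt hb))
          ((List.prefix_append _ _).trans h) (List.prefix_append _ _)
      exact ⟨rfl, (List.prefix_append_right_inj _).mp h⟩
  · obtain ⟨_ | ⟨k, l⟩, ha⟩ := a
    · rfl
    refine (toModel_V_eq_of_subt (a := g ⟨k :: l, ha⟩)
      ((subt_append_sub _ l).trans (subt_eq_sub ⟨l, hpos ha⟩))).trans <|
      (toModel_V_eq _).symm.trans
        (toModel_V_node_cons ?_ (⟨k :: l, ha⟩ : N.toModel.W) ⟨l, hpos ha⟩ rfl).symm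
    rw [cutPieces, List.getElem?_map, List.getElem?_eq_getElem (hlt ha), Option.map_some]

lemma colLT_of_mem_cutPieces (ht : t.toModel.Persistent) {x : CTree n} (hx : x ∈ cutPieces t)
    {l : List ℕ} {s : CTree n} (hs : subt l x = some s) : ColLT t.color s.color := by
  obtain ⟨p, hp, rfl⟩ := List.mem_map.mp hx
  have hp : IsCutPoint t p := mem_cutPoints.mp hp
  let a : t.toModel.W := ⟨p.1 ++ l, by rw [subt_append_sub, hs]; rfl⟩
  have ha : t.sub a = s :=
    Option.some_inj.mp ((subt_eq_sub a).symm.trans (by rw [subt_append_sub, hs]))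
  rw [← ha]
  exact ⟨colLE_of_persistent ht (isRoot_root a),
    fun h => hp.color_ne_of_R ht (a := a) (List.prefix_append _ _) h.symm⟩

lemma exists_subt_cons_of_mem_cutPieces {x : CTree n} (hx : x ∈ cutPieces t) :
    ∃ i l, subt (i :: l) t = some x := by
  obtain ⟨p, hp, rfl⟩ := List.mem_map.mp hx
  obtain ⟨i, l, hil⟩ := List.exists_cons_of_ne_nil (mem_cutPoints.mp hp).ne_nil
  exact ⟨i, l, hil ▸ subt_eq_sub p⟩

end CTree

/-! ### Thinning the pieces to an antichain -/

namespace CTree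

lemma exists_cover_map {L X : List (CTree n)} (hcov : ∀ s ∈ L, ∃ x ∈ X, MLE x s)
    (s : CTree n) :
    ∃ x, ∃ φ : s.toModel.W → x.toModel.W, s ∈ L → x ∈ X ∧ Monotonic s.toModel x.toModel φ ∧
      (s ∈ X → x = s ∧ ∀ a, (φ a).1 = a.1) := by
  -- on the members of `X` themselves the identity is chosen, so that the induced map is onto
  by_cases hsX : s ∈ X
  · exact ⟨s, id, fun _ => ⟨hsX, monotonic_id _, fun _ => ⟨rfl, fun _ => rfl⟩⟩⟩
  by_cases hsL : s ∈ L
  · obtain ⟨x, hx, φ, hφ⟩ := hcov s hsL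
    exact ⟨x, φ, fun _ => ⟨hx, hφ, fun h => absurd h hsX⟩⟩
  · exact ⟨s, id, fun h => absurd h hsL⟩

lemma exists_monotonicOntoAbove_node_of_cover {c : Col n} {L X : List (CTree n)} (hX : X.Nodup)
    (hXL : ∀ x ∈ X, x ∈ L) (hcov : ∀ s ∈ L, ∃ x ∈ X, MLE x s) :
    ∃ f, MonotonicOntoAbove (node c L).toModel (node c X).toModel (root _) f := by
  set NL := node c L
  set NX := node c X
  choose cov φ hφ using exists_cover_map hcov
  have hcovX : ∀ s ∈ L, X[X.idxOf (cov s)]? = some (cov s) := fun s hs =>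
    List.getElem?_idxOf (hφ s hs).1
  let f : NL.toModel.W → NX.toModel.W := fun
    | ⟨[], _⟩ => NX.root
    | ⟨i :: l, h⟩ =>
      ⟨X.idxOf (cov (L[i]'(lt_length_of_isSome_subt_cons h))) ::
        (φ _ ⟨l, isSome_subt_getElem h⟩).1, by
          rw [subt_node_cons, hcovX _ (List.getElem_mem _), Option.bind_some]
          exact (φ _ _).2⟩
  refine ⟨f, fun a b _ hab => ?_, fun a _ => ?_, fun b => ?_⟩
  · obtain ⟨_ | ⟨i, l⟩, ha⟩ := a
    · exact isRoot_root _
    obtain ⟨_ | ⟨j, m⟩, hb⟩ := b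
    · exact absurd (List.prefix_nil.mp hab) (List.cons_ne_nil _ _)
    obtain ⟨rfl, hlm⟩ := List.cons_prefix_cons.mp hab
    exact List.cons_prefix_cons.mpr
      ⟨rfl, (hφ _ (List.getElem_mem _)).2.1.1 ⟨l, isSome_subt_getElem ha⟩
        ⟨m, isSome_subt_getElem hb⟩ hlm⟩
  · obtain ⟨_ | ⟨i, l⟩, ha⟩ := a
    · rfl
    have hi := lt_length_of_isSome_subt_cons ha
    funext p
    refine (congrFun (toModel_V_node_cons (hcovX _ (List.getElem_mem hi)) (f ⟨i :: l, ha⟩) _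
      rfl) p).trans (((hφ _ (List.getElem_mem hi)).2.1.2 _ p).trans ?_)
    exact (congrFun (toModel_V_node_cons (List.getElem?_eq_getElem hi)
      (⟨i :: l, ha⟩ : NL.toModel.W) ⟨l, isSome_subt_getElem ha⟩ rfl) p).symm
  · obtain ⟨_ | ⟨k, l⟩, hb⟩ := b
    · exact ⟨NL.root, isRoot_root _, rfl⟩
    obtain ⟨x, hk, hl⟩ := exists_of_isSome_subt_cons hb
    have hxX := List.mem_of_getElem? hk
    have hiL : L[L.idxOf x]? = some x := List.getElem?_idxOf (hXL x hxX)
    let a : NL.toModel.W :=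
      ⟨L.idxOf x :: l, by rw [subt_node_cons, hiL, Option.bind_some]; exact hl⟩
    refine ⟨a, isRoot_root _, Subtype.ext ?_⟩
    have key : ∀ y (w : y.toModel.W), y = x → w.1 = l →
        X.idxOf (cov y) :: (φ y w).1 = k :: l := by
      rintro y w rfl rfl
      obtain ⟨hcx, hφx⟩ := (hφ y (hXL y hxX)).2.2 hxX
      rw [hφx, hcx, hX.idxOf_eq_of_getElem? hk]
    exact key _ _ (List.getElem_idxOf _) rfl

lemma exists_embedding_node_of_subset {c : Col n} {L X : List (CTree n)} (hX : X.Nodup)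
    (hXL : ∀ x ∈ X, x ∈ L) :
    ∃ g, IsEmbedding (node c X).toModel (node c L).toModel g ∧ g (root _) = root _ := by
  set NL := node c L
  set NX := node c X
  let g : NX.toModel.W → NL.toModel.W := fun
    | ⟨[], _⟩ => NL.root
    | ⟨k :: l, h⟩ => ⟨L.idxOf (X[k]'(lt_length_of_isSome_subt_cons h)) :: l, by
        rw [subt_node_cons, List.getElem?_idxOf (hXL _ (List.getElem_mem _)), Option.bind_some]
        exact isSome_subt_getElem h⟩
  refine ⟨g, ⟨fun a b => ?_, fun a => ?_⟩, rfl⟩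
  · obtain ⟨_ | ⟨k, l⟩, ha⟩ := a
    · exact iff_of_true List.nil_prefix List.nil_prefix
    obtain ⟨_ | ⟨k', l'⟩, hb⟩ := b
    · exact iff_of_false (fun h => List.cons_ne_nil _ _ (List.prefix_nil.mp h))
        (fun h => List.cons_ne_nil _ _ (List.prefix_nil.mp h))
    show k :: l <+: k' :: l' ↔ _ :: l <+: _ :: l'
    rw [List.cons_prefix_cons, List.cons_prefix_cons]
    refine and_congr_left fun _ => ⟨by rintro rfl; rfl, fun h => ?_⟩
    exact hX.getElem_inj_iff.mp ((List.idxOf_inj (hXL _ (List.getElem_mem _))).mp h)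
  · obtain ⟨_ | ⟨k, l⟩, ha⟩ := a
    · rfl
    have hk := lt_length_of_isSome_subt_cons ha
    exact (toModel_V_node_cons (List.getElem?_idxOf (hXL _ (List.getElem_mem hk)))
      (g ⟨k :: l, ha⟩) ⟨l, isSome_subt_getElem ha⟩ rfl).trans
      (toModel_V_node_cons (List.getElem?_eq_getElem hk) (⟨k :: l, ha⟩ : NX.toModel.W)
        ⟨l, isSome_subt_getElem ha⟩ rfl).symm

end CTree

/-! ### Codes and membership in the universal model -/

namespace CTree

lemma colCode_injective : Function.Injective (colCode (n := n)) := by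
  have hsum : ∀ c : Col n,
      colCode c =
        ∑ i ∈ (Finset.univ.filter fun i => c i = true).map Fin.valEmbedding, 2 ^ i := by
    intro c
    rw [Finset.sum_map, Finset.sum_filter]
    rfl
  intro c d h
  rw [hsum, hsum] at h
  have hcd := Finset.geomSum_injective le_rfl h
  funext i
  have hi := congrArg (i.val ∈ ·) hcd
  simp only [Finset.mem_map, Finset.mem_filter, Finset.mem_univ, true_and, Fin.valEmbedding_apply,
    Fin.val_inj, exists_eq_right, eq_iff_iff] at hi
  exact Bool.eq_iff_iff.mpr hi

lemma listCode_injective : Function.Injective listCode := by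
  intro l m h
  induction l generalizing m with
  | nil => cases m <;> simp_all [listCode]
  | cons a l ih =>
    cases m with
    | nil => simp [listCode] at h
    | cons b m =>
      simp only [listCode, Nat.add_right_cancel_iff] at h
      obtain ⟨rfl, hlm⟩ := Nat.pair_eq_pair.mp h
      rw [ih hlm]

lemma code_injective : Function.Injective (code (n := n)) := by
  intro t
  induction t using code.induct with
  | _ c ts ih =>
    rintro ⟨d, ss⟩ h
    simp only [code.eq_1, List.map_attach_eq_pmap, List.pmap_eq_map] at h
    obtain ⟨hc, hl⟩ := Nat.pair_eq_pair.mp h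
    rw [colCode_injective hc,
      List.eq_of_map_eq_of_injOn (fun x hx => ih ⟨x, hx⟩) (listCode_injective hl)]

lemma exists_isChain_code_lt (X : Finset (CTree n)) :
    ∃ Y : List (CTree n), (∀ x, x ∈ Y ↔ x ∈ X) ∧ Y.Nodup ∧
      Y.IsChain (fun a b => code a < code b) := by
  have hperm := X.toList.mergeSort_perm (fun a b => decide (code a ≤ code b))
  have hnd : (X.toList.mergeSort fun a b => decide (code a ≤ code b)).Nodup :=
    hperm.nodup_iff.mpr X.nodup_toList
  refine ⟨_, fun x => by rw [hperm.mem_iff, Finset.mem_toList], hnd, ?_⟩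
  refine List.Pairwise.isChain (((List.pairwise_mergeSort (by simp; omega) (by simp; omega)
    X.toList).and hnd).imp fun ⟨hle, hne⟩ => ?_)
  exact lt_of_le_of_ne (by simpa using hle) fun h => hne (code_injective h)

end CTree

lemma UMem.of_subt {t s : CTree n} (ht : UMem t) {l : List ℕ} (h : CTree.subt l t = some s) :
    UMem s := by
  induction l generalizing t with
  | nil => exact Option.some_inj.mp h ▸ ht
  | cons i l ih =>
    cases ht with
    | single c => simp [CTree.subt_node_cons] at h
    | step c ts _ hU =>
      obtain ⟨x, hx, -⟩ := CTree.exists_of_isSome_subt_cons (Option.isSome_of_eq_some h)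
      rw [CTree.subt_node_cons, hx, Option.bind_some] at h
      exact ih (hU x (List.mem_of_getElem? hx)) h

lemma UMem.node {c : Col n} {ts : List (CTree n)} (hU : ∀ t ∈ ts, UMem t)
    (hsort : ts.IsChain fun a b => CTree.code a < CTree.code b)
    (hanti : ∀ t ∈ ts, ∀ s ∈ ts, t ≠ s → ¬ MLE t s)
    (hcol : ∀ t ∈ ts, ∀ l s, CTree.subt l t = some s → ColLT c s.color) :
    UMem (CTree.node c ts) := by
  by_cases hne : ts = []
  · exact hne ▸ UMem.single c
  · exact UMem.step c ts hne hU hsort hanti hcol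

open CTree in
theorem exists_uMem_reducesTo {M : KStruct} [Fintype M.W] (hM : M.IsNModel n)
    (hlin : ∀ v a b : M.W, M.R a v → M.R b v → M.R a b ∨ M.R b a) (w : M.W) :
    ∃ t : CTree n, UMem t ∧ ReducesTo M w t.toModel t.root := by
  have hwf : WellFounded fun u v : M.W => M.R v u ∧ u ≠ v :=
    wellFounded_strict_of_finite (fun a b c hab hbc => hM.1.2.1 c b a hbc hab)
      fun a b hab hba => hM.1.2.2.1 a b hba hab
  induction w using hwf.induction with
  | _ w ih =>
    have hIH : ∀ u, ∃ t : CTree n, ImmSucc M w u →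
        UMem t ∧ ReducesTo M u t.toModel t.root :=
      fun u => if hu : ImmSucc M w u then (ih u ⟨hu.1, Ne.symm hu.2.1⟩).imp fun _ h _ => h
        else ⟨node (fun _ => false) [], fun h => absurd h hu⟩
    choose T hT using hIH
    set G := node (fun i => M.V w i) ((immSuccList M w).map T)
    have hG : ReducesTo M w G.toModel G.root :=
      ⟨exists_monotonicOntoAbove_glue hM.1 hlin (colVal_of_bound (hM.2 w)) T
          fun u hu => (hT u hu).2.1,
        exists_embedding_glue hM.1 hlin (colVal_of_bound (hM.2 w)) T fun u hu => (hT u hu).2.2⟩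
    have : Finite G.toModel.W := hG.1.elim fun _ hf => hf.finite
    have hGper : G.toModel.Persistent := hG.2.elim fun _ hg => hg.1.persistent hM.1.2.2.2
    have hUMem : ∀ y ∈ G.cutPieces, UMem y := by
      intro y hy
      obtain ⟨i, l, h⟩ := exists_subt_cons_of_mem_cutPieces hy
      obtain ⟨u, hi, -⟩ := exists_of_isSome_subt_cons_map (Option.isSome_of_eq_some h)
      rw [subt_node_cons, List.getElem?_map, hi, Option.map_some, Option.bind_some] at h
      exact (hT u (mem_immSuccList.mp (List.mem_of_getElem? hi))).1.of_subt h
    obtain ⟨X, hXP, hXanti, hXcov⟩ :=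
      exists_antichain_cover MLE.refl (fun _ _ _ => MLE.trans) G.cutPieces.toFinset
    obtain ⟨Y, hYX, hYnd, hYsort⟩ := exists_isChain_code_lt X
    have hYP : ∀ y ∈ Y, y ∈ G.cutPieces := fun y hy =>
      List.mem_toFinset.mp (hXP ((hYX y).mp hy))
    refine ⟨node G.color Y, UMem.node (fun y hy => hUMem y (hYP y hy)) hYsort
      (fun y hy y' hy' => hXanti ((hYX y).mp hy) ((hYX y').mp hy'))
      (fun y hy _ _ => colLT_of_mem_cutPieces hGper (hYP y hy)), ?_⟩
    have hYcov : ∀ s ∈ G.cutPieces, ∃ y ∈ Y, MLE y s := fun s hs =>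
      (hXcov s (List.mem_toFinset.mpr hs)).imp fun x hx => ⟨(hYX x).mpr hx.1, hx.2⟩
    exact hG.trans isRoot_root <|
      ReducesTo.trans ⟨exists_monotonicOntoAbove_cut hGper, exists_embedding_cut⟩ isRoot_root
        ⟨exists_monotonicOntoAbove_node_of_cover hYnd hYP hYcov,
          exists_embedding_node_of_subset hYnd hYP⟩

/-- every finite tree-like n-model `M` maps monotonically onto some node
`T_w` of `𝒯(n)`, and `T_w` is isomorphic to a submodel of `M` with the same root. -/
theorem tree_reduces_to_univ_node (n : ℕ) (M : KStruct) [Fintype M.W]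
    (hM : M.IsNModel n) (r : M.W) (htree : IsTree M r) :
    ∃ t : CTree n, UMem t ∧
      (∃ f : M.W → t.toModel.W, Monotonic M t.toModel f ∧ Function.Surjective f) ∧
      (∃ g : t.toModel.W → M.W, Function.Injective g ∧
        (∀ a b, t.toModel.R a b ↔ M.R (g a) (g b)) ∧
        (∀ a p, M.V (g a) p = t.toModel.V a p) ∧
        g t.root = r) := by
  obtain ⟨t, ht, ⟨f, hfR, hfV, hfS⟩, g, hg, hgr⟩ := exists_uMem_reducesTo hM htree.2.2 r
  exact ⟨t, ht,
    ⟨f, ⟨fun v u => hfR v u (htree.1 v), fun v => congrFun (hfV v (htree.1 v))⟩,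
      fun b => (hfS b).imp fun _ h => h.2⟩,
    g, hg.injective CTree.toModel_R_antisymm hM.1.1, hg.1, fun a => congrFun (hg.2 a), hgr⟩
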